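/- For every fixed real number y, the difference h(x+y) − h(x) tends to 0 as x → ∞ (where h is evaluated only at nonnegative arguments, i.e., for x large enough that x and x+y are nonnegative). -/

import Mathlib

/-!
On `[m_n, m_{n+1}]` the function `h` is affine with slope `(F_{n+1} - F_n) / (m_{n+1} - m_n)`,
which is at most `6 (φ / 2)^n` since `F_{n+1} ≤ φ^n` and `m_{n+1} - m_n ≥ 2^n / 6`. So for every
`ε > 0`, `h` is `ε`-Lipschitz on a half-line `[m_N, ∞)`, and then `|h (x + y) - h x| ≤ ε |y|` for
large `x`.
-/

open Filter Topology Real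
open scoped goldenRatio

section Piecewise

variable {f : ℝ → ℝ} {t : ℕ → ℝ} {L : ℝ} {N : ℕ}
  (hpiece : ∀ k ≥ N, ∀ a b, t k ≤ a → a ≤ b → b ≤ t (k + 1) → |f b - f a| ≤ L * (b - a))
include hpiece

theorem abs_sub_le_mul_of_piecewise_of_le_add (n : ℕ) {a b : ℝ} (ha : t N ≤ a) (hab : a ≤ b)
    (hb : b ≤ t (N + n)) :
    |f b - f a| ≤ L * (b - a) := by
  induction n generalizing a b with
  | zero => simp [le_antisymm hab (hb.trans ha)]
  | succ n ih =>
    rcases le_total b (t (N + n)) with hbn | hnb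
    · exact ih ha hab hbn
    rcases le_total (t (N + n)) a with hna | han
    · exact hpiece (N + n) (by omega) a b hna hab hb
    calc |f b - f a| = |(f b - f (t (N + n))) + (f (t (N + n)) - f a)| := by
          rw [sub_add_sub_cancel]
      _ ≤ |f b - f (t (N + n))| + |f (t (N + n)) - f a| := abs_add_le _ _
      _ ≤ L * (b - t (N + n)) + L * (t (N + n) - a) :=
          add_le_add (hpiece (N + n) (by omega) _ b le_rfl hnb hb) (ih ha han le_rfl)
      _ = L * (b - a) := by ring

theorem abs_sub_le_mul_of_piecewise (ht : Tendsto t atTop atTop) {a b : ℝ} (ha : t N ≤ a)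
    (hab : a ≤ b) : |f b - f a| ≤ L * (b - a) := by
  obtain ⟨K, hK⟩ := eventually_atTop.1 (ht.eventually_ge_atTop b)
  exact abs_sub_le_mul_of_piecewise_of_le_add hpiece K ha hab (hK _ (by omega))

end Piecewise

theorem tendsto_sub_shift_of_eventually_lipschitz {f : ℝ → ℝ}
    (hf : ∀ ε > 0, ∃ A, ∀ a b, A ≤ a → a ≤ b → |f b - f a| ≤ ε * (b - a)) (y : ℝ) :
    Tendsto (fun x => f (x + y) - f x) atTop (𝓝 0) := by
  rw [Metric.tendsto_atTop]
  intro ε hε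
  have hy : 0 < |y| + 1 := by positivity
  obtain ⟨A, hA⟩ := hf (ε / (|y| + 1)) (by positivity)
  refine ⟨A + |y|, fun x hx => ?_⟩
  have hshift : |f (x + y) - f x| ≤ ε / (|y| + 1) * |y| := by
    rcases le_total 0 y with hy0 | hy0
    · simpa [abs_of_nonneg hy0] using
        hA x (x + y) (by linarith [abs_nonneg y]) (by linarith)
    · simpa [abs_sub_comm, abs_of_nonpos hy0] using
        hA (x + y) x (by linarith [neg_abs_le y]) (by linarith)
  calc dist (f (x + y) - f x) 0 = |f (x + y) - f x| := by rw [Real.dist_eq, sub_zero]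
    _ ≤ ε / (|y| + 1) * |y| := hshift
    _ < ε := by rw [div_mul_eq_mul_div, div_lt_iff₀ hy]; nlinarith

theorem Real.fib_succ_le_goldenRatio_pow (n : ℕ) : (Nat.fib (n + 1) : ℝ) ≤ φ ^ n := by
  refine le_of_mul_le_mul_left ?_ goldenRatio_pos
  rw [← pow_succ', ← goldenRatio_mul_fib_succ_add_fib n]
  exact le_add_of_nonneg_right (Nat.cast_nonneg _)

/-- The points `m_n` of the statement, the Jacobsthal numbers. -/
noncomputable def jacobsthal (n : ℕ) : ℝ := (2 ^ n - (-1) ^ n) / 3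

theorem jacobsthal_succ_sub (n : ℕ) :
    jacobsthal (n + 1) - jacobsthal n = (2 ^ n + 2 * (-1) ^ n) / 3 := by
  simp only [jacobsthal]; ring

theorem pow_div_six_le_jacobsthal_succ_sub {n : ℕ} (hn : 2 ≤ n) :
    2 ^ n / 6 ≤ jacobsthal (n + 1) - jacobsthal n := by
  have h4 : (4 : ℝ) ≤ 2 ^ n := by
    calc (4 : ℝ) = 2 ^ 2 := by norm_num
      _ ≤ 2 ^ n := pow_le_pow_right₀ (by norm_num) hn
  rw [jacobsthal_succ_sub]
  linarith [(abs_le.1 (abs_neg_one_pow (α := ℝ) n).le).1]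

theorem natCast_div_three_le_jacobsthal (n : ℕ) : (n : ℝ) / 3 ≤ jacobsthal n := by
  have : (n : ℝ) + 1 ≤ 2 ^ n := by exact_mod_cast Nat.lt_two_pow_self
  rw [jacobsthal]
  linarith [(abs_le.1 (abs_neg_one_pow (α := ℝ) n).le).2]

theorem tendsto_jacobsthal_atTop : Tendsto jacobsthal atTop atTop :=
  tendsto_atTop_mono natCast_div_three_le_jacobsthal <|
    tendsto_natCast_atTop_atTop.atTop_div_const (by norm_num)

theorem tendsto_fib_slope_jacobsthal :
    Tendsto (fun n => ((Nat.fib (n + 1) : ℝ) - Nat.fib n) / (jacobsthal (n + 1) - jacobsthal n))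
      atTop (𝓝 0) := by
  have hq : Tendsto (fun n : ℕ => 6 * (φ / 2) ^ n) atTop (𝓝 0) := by
    simpa using (tendsto_pow_atTop_nhds_zero_of_lt_one (by positivity)
      ((div_lt_one two_pos).2 Real.goldenRatio_lt_two)).const_mul 6
  refine squeeze_zero' ?_ ?_ hq
  · filter_upwards [eventually_ge_atTop 2] with n hn
    have hfib : (Nat.fib n : ℝ) ≤ Nat.fib (n + 1) := by exact_mod_cast Nat.fib_le_fib_succ
    exact div_nonneg (sub_nonneg.2 hfib) ((by positivity : (0 : ℝ) < 2 ^ n / 6).le.trans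
      (pow_div_six_le_jacobsthal_succ_sub hn))
  · filter_upwards [eventually_ge_atTop 2] with n hn
    have hden := pow_div_six_le_jacobsthal_succ_sub hn
    rw [div_le_iff₀ ((by positivity : (0 : ℝ) < 2 ^ n / 6).trans_le hden)]
    calc (Nat.fib (n + 1) : ℝ) - Nat.fib n ≤ φ ^ n := by
          linarith [Real.fib_succ_le_goldenRatio_pow n, (Nat.fib n).cast_nonneg (α := ℝ)]
      _ = 6 * (φ / 2) ^ n * (2 ^ n / 6) := by generalize φ = g; rw [div_pow]; field_simp
      _ ≤ 6 * (φ / 2) ^ n * (jacobsthal (n + 1) - jacobsthal n) := by gcongr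

theorem tendsto_h_shift_general
    (M : ℕ → ℝ) (hM : ∀ n : ℕ, M n = (2 ^ n - (-1) ^ n) / 3)
    (h : ℝ → ℝ)
    (hlin : ∀ n : ℕ, 2 ≤ n → ∀ x ∈ Set.Icc (M n) (M (n + 1)),
      h x = (Nat.fib n : ℝ) +
        ((Nat.fib (n + 1) : ℝ) - (Nat.fib n : ℝ)) * (x - M n) / (M (n + 1) - M n)) :
    ∀ y : ℝ,
      Filter.Tendsto (fun x : ℝ => h (x + y) - h x) Filter.atTop (nhds 0) := by
  obtain rfl : M = jacobsthal := funext hM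
  refine tendsto_sub_shift_of_eventually_lipschitz fun ε hε => ?_
  obtain ⟨N, hN⟩ := eventually_atTop.1 <|
    (tendsto_fib_slope_jacobsthal.eventually (eventually_abs_sub_lt 0 hε)).and
      (eventually_ge_atTop 2)
  refine ⟨jacobsthal N, fun _ _ ha hab =>
    abs_sub_le_mul_of_piecewise (fun k hk u v hku huv hvk => ?_) tendsto_jacobsthal_atTop ha hab⟩
  obtain ⟨hslope, hk2⟩ := hN k hk
  rw [sub_zero] at hslope
  have hdiff : h v - h u = ((Nat.fib (k + 1) : ℝ) - Nat.fib k) /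
      (jacobsthal (k + 1) - jacobsthal k) * (v - u) := by
    rw [hlin k hk2 v ⟨hku.trans huv, hvk⟩, hlin k hk2 u ⟨hku, huv.trans hvk⟩]
    ring
  rw [hdiff, abs_mul, abs_of_nonneg (sub_nonneg.2 huv)]
  gcongr

/-- For every fixed real `y`, `h(x+y) - h(x) → 0` as `x → ∞`. -/
theorem tendsto_h_shift
    (M : ℕ → ℝ) (hM : ∀ n : ℕ, M n = (2 ^ n - (-1) ^ n) / 3)
    (h : ℝ → ℝ)
    (h01 : ∀ x ∈ Set.Icc (0 : ℝ) 1, h x = x)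
    (hlin : ∀ n : ℕ, 2 ≤ n → ∀ x ∈ Set.Icc (M n) (M (n + 1)),
      h x = (Nat.fib n : ℝ) +
        ((Nat.fib (n + 1) : ℝ) - (Nat.fib n : ℝ)) * (x - M n) / (M (n + 1) - M n)) :
    ∀ y : ℝ,
      Filter.Tendsto (fun x : ℝ => h (x + y) - h x) Filter.atTop (nhds 0) :=
  tendsto_h_shift_general M hM h hlin
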